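/- Let T be a transitive nonabelian simple subgroup of Sym(Q) with trivial centraliser in Sym(Q) and suppose T acts primitively on Q with |Q| = q. Let Γ(J) = H(r,q) and let D = Diag_r(T) = {(t,…,t) : t ∈ T} ≤ Sym(Q)^r. Then the normaliser of D in Aut(Γ(J)) = Sym(Q) wr Sym(Fin r) equals Diag_r(N_{Sym(Q)}(T)) ⋊ Sym(Fin r). -/

import Mathlib

/-! Conjugating the diagonal element `(t,…,t)` by `hσ` gives the base element whose coordinates
are the conjugates `h_j t h_j⁻¹` (the top part `σ` only permutes them), so `hσ` normalises
`Diag_r(T)` iff for every `t ∈ T` these conjugates all agree and lie in `T`, and likewise for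
`hσ⁻¹`. Agreement of `h_i t h_i⁻¹` and `h_j t h_j⁻¹` for all `t ∈ T` puts `h_j⁻¹ h_i` in the
centraliser of `T`, which is trivial; so `h` is constant, with value normalising `T`. -/

/-- The automorphism of `H(r,q)` determined by `h ∈ Sym(Q)^r`, `σ ∈ Sym(Fin r)`. -/
def hammAut {r : ℕ} {Q : Type*} (h : Fin r → Equiv.Perm Q) (σ : Equiv.Perm (Fin r)) :
    Equiv.Perm (Fin r → Q) :=
  (Equiv.piCongrRight h).trans (Equiv.arrowCongr σ (Equiv.refl Q))

open Equiv

section GroupTheory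

variable {G : Type*} [Group G] {T : Subgroup G}

theorem eq_of_forall_conj_eq (hcent : ∀ g : G, (∀ t ∈ T, g * t = t * g) → g = 1) {a b : G}
    (hab : ∀ t ∈ T, a * t * a⁻¹ = b * t * b⁻¹) : a = b := by
  refine inv_mul_eq_one.mp (hcent _ fun t ht => ?_)
  calc a⁻¹ * b * t = a⁻¹ * (b * t * b⁻¹) * b := by group
    _ = a⁻¹ * (a * t * a⁻¹) * b := by rw [hab t ht]
    _ = t * (a⁻¹ * b) := by group

theorem forall_conj_const_iff_exists_mem_normalizer {ι : Type*} [Nonempty ι]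
    (hcent : ∀ g : G, (∀ t ∈ T, g * t = t * g) → g = 1) (h : ι → G) :
    (∀ t ∈ T, (∃ s ∈ T, ∀ j, h j * t * (h j)⁻¹ = s) ∧ ∃ s ∈ T, ∀ j, (h j)⁻¹ * t * h j = s) ↔
      ∃ n ∈ Subgroup.normalizer T, ∀ i, h i = n := by
  constructor
  · intro H
    obtain ⟨i₀⟩ := ‹Nonempty ι›
    refine ⟨h i₀, Subgroup.mem_normalizer_iff.mpr fun t => ⟨fun ht => ?_, fun ht => ?_⟩,
      fun i => eq_of_forall_conj_eq hcent fun t ht => ?_⟩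
    · obtain ⟨⟨s, hs, hconj⟩, -⟩ := H t ht
      exact hconj i₀ ▸ hs
    · obtain ⟨-, s, hs, hconj⟩ := H _ ht
      rw [← hconj i₀] at hs
      simpa [mul_assoc] using hs
    · obtain ⟨⟨s, -, hconj⟩, -⟩ := H t ht
      rw [hconj i, hconj i₀]
  · rintro ⟨n, hn, hconst⟩ t ht
    obtain rfl : h = fun _ => n := funext hconst
    exact ⟨⟨n * t * n⁻¹, (Subgroup.mem_normalizer_iff.mp hn t).mp ht, fun _ => rfl⟩,
      n⁻¹ * t * n, by simpa using (Subgroup.mem_normalizer_iff.mp (inv_mem hn) t).mp ht,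
      fun _ => rfl⟩

end GroupTheory

section HammingAut

variable {Q : Type*} {r : ℕ}

theorem hammAut_one_eq_diag_iff {g : Fin r → Perm Q} {s : Perm Q} :
    hammAut g 1 = hammAut (fun _ => s) 1 ↔ ∀ i, g i = s := by
  refine ⟨fun hgs i => Equiv.ext fun a => ?_, fun hgs => by simp only [funext hgs]⟩
  simpa [hammAut, pull_end] using congrFun (congrArg (· fun _ => a) hgs) i

theorem hammAut_mul_diag_mul_inv (h : Fin r → Perm Q) (σ : Perm (Fin r)) (t : Perm Q) :
    hammAut h σ * hammAut (fun _ => t) 1 * (hammAut h σ)⁻¹ =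
      hammAut (fun i => h (σ.symm i) * t * (h (σ.symm i))⁻¹) 1 := by
  ext x i
  simp [hammAut, Perm.inv_def, pull_end]

theorem inv_hammAut_mul_diag_mul (h : Fin r → Perm Q) (σ : Perm (Fin r)) (t : Perm Q) :
    (hammAut h σ)⁻¹ * hammAut (fun _ => t) 1 * hammAut h σ =
      hammAut (fun i => (h i)⁻¹ * t * h i) 1 := by
  ext x i
  simp [hammAut, Perm.inv_def, pull_end]

end HammingAut

theorem stmt_18_general {Q : Type*} {r : ℕ}
    (hr : 0 < r)
    (T : Subgroup (Equiv.Perm Q))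
    (hcent : ∀ g : Equiv.Perm Q, (∀ t ∈ T, g * t = t * g) → g = 1)
    (h : Fin r → Equiv.Perm Q) (σ : Equiv.Perm (Fin r)) :
    let D : Set (Equiv.Perm (Fin r → Q)) :=
      {y | ∃ t ∈ T, y = hammAut (fun _ => t) 1}
    ((∀ d ∈ D, hammAut h σ * d * (hammAut h σ)⁻¹ ∈ D ∧
        (hammAut h σ)⁻¹ * d * hammAut h σ ∈ D) ↔
      ∃ n ∈ Subgroup.normalizer T, ∀ i, h i = n) := by
  intro D
  have : Nonempty (Fin r) := ⟨⟨0, hr⟩⟩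
  have mem_D : ∀ g : Fin r → Perm Q, hammAut g 1 ∈ D ↔ ∃ s ∈ T, ∀ i, g i = s := fun g =>
    exists_congr fun s => and_congr_right fun _ => hammAut_one_eq_diag_iff
  have conj_mem_D (t : Perm Q) :
      (hammAut h σ * hammAut (fun _ => t) 1 * (hammAut h σ)⁻¹ ∈ D ∧
        (hammAut h σ)⁻¹ * hammAut (fun _ => t) 1 * hammAut h σ ∈ D) ↔
      (∃ s ∈ T, ∀ j, h j * t * (h j)⁻¹ = s) ∧ ∃ s ∈ T, ∀ j, (h j)⁻¹ * t * h j = s := by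
    rw [hammAut_mul_diag_mul_inv, inv_hammAut_mul_diag_mul, mem_D, mem_D]
    exact and_congr_left' (exists_congr fun s => and_congr_right'
      (σ.symm.forall_congr_right (q := fun j => h j * t * (h j)⁻¹ = s)))
  rw [← forall_conj_const_iff_exists_mem_normalizer hcent]
  exact ⟨fun H t ht => (conj_mem_D t).mp (H _ ⟨t, ht, rfl⟩),
    fun H _ ⟨t, ht, hd⟩ => hd ▸ (conj_mem_D t).mpr (H t ht)⟩

/-- Let `T` be a transitive nonabelian simple primitive subgroup of `Sym(Q)` with trivial
centraliser.  The normaliser of `Diag_r(T)` in `Aut(H(r,q)) = Sym(Q) wr Sym(Fin r)`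
equals `Diag_r(N_{Sym(Q)}(T)) ⋊ Sym(Fin r)`: an element `hσ` normalises the diagonal
iff `h` is constant with value in `N_{Sym(Q)}(T)`. -/
theorem stmt_18 {Q : Type*} [Fintype Q] [DecidableEq Q] {q r : ℕ}
    (hq : Fintype.card Q = q) (hr : 0 < r)
    (T : Subgroup (Equiv.Perm Q))
    (hsimple : IsSimpleGroup ↥T) (hnonab : ¬ ∀ a b : ↥T, a * b = b * a)
    (htrans : ∀ x y : Q, ∃ t ∈ T, t x = y)
    (hcent : ∀ g : Equiv.Perm Q, (∀ t ∈ T, g * t = t * g) → g = 1)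
    (hprim : ∀ B : Set Q, MulAction.IsBlock ↥T B → B.Subsingleton ∨ B = Set.univ)
    (h : Fin r → Equiv.Perm Q) (σ : Equiv.Perm (Fin r)) :
    let D : Set (Equiv.Perm (Fin r → Q)) :=
      {y | ∃ t ∈ T, y = hammAut (fun _ => t) 1}
    ((∀ d ∈ D, hammAut h σ * d * (hammAut h σ)⁻¹ ∈ D ∧
        (hammAut h σ)⁻¹ * d * hammAut h σ ∈ D) ↔
      ∃ n ∈ Subgroup.normalizer T, ∀ i, h i = n) :=
  stmt_18_general hr T hcent h σ
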